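/- Let r ≥ 1 and let ρ_0, ρ_1, ..., ρ_{r-1} be density matrices. Suppose dist(ρ_{j-1}, ρ_j) ≤ 3√(α_j) for j = 1, ..., r-1 and there is a POVM element 0 ≤ M ≤ I with Tr(M ρ_0) ≥ 2/3 and α_r := Tr(M ρ_{r-1}). Then α_r ≥ 2/3 - 3∑_{j=1}^{r-1}√(α_j), and consequently ∑_{j=1}^r α_j ≥ 1/(21r). -/

import Mathlib

/-! Write `A = ρ - σ = A⁺ - A⁻`. For an effect `0 ≤ M ≤ 1`, `Tr(M A) ≤ Tr A⁺`, and
`Tr A⁺ = (‖A‖_tr + Tr A) / 2 = dist(ρ, σ)` because `Tr A = 0`; so the acceptance probability of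
`M` drops by at most `3√α_j` at step `j`, and telescoping gives the first bound. Since
`α_r ∈ [0, 1]`, `√α_r ≥ α_r`, hence `∑_{j ≤ r} √α_j ≥ 2/9`, and Cauchy–Schwarz yields
`r ∑_{j ≤ r} α_j ≥ 4/81 > 1/21`. -/

open Finset
open scoped ComplexOrder

noncomputable section

/-- The swap matrix on `H ⊗ H`. -/
def swapMatrix (ι : Type*) [Fintype ι] [DecidableEq ι] : Matrix (ι × ι) (ι × ι) ℂ :=
  Matrix.of fun p q => if p.1 = q.2 ∧ p.2 = q.1 then 1 else 0

/-- Partial trace over the first tensor factor. -/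
def ptraceFst {ι κ : Type*} [Fintype ι] (M : Matrix (ι × κ) (ι × κ) ℂ) : Matrix κ κ ℂ :=
  Matrix.of fun j j' => ∑ i, M (i, j) (i, j')

/-- Partial trace over the second tensor factor. -/
def ptraceSnd {ι κ : Type*} [Fintype κ] (M : Matrix (ι × κ) (ι × κ) ℂ) : Matrix ι ι ℂ :=
  Matrix.of fun i i' => ∑ j, M (i, j) (i', j)

/-- The outer product `|ψ⟩⟨φ|`. -/
def outer {n : Type*} (ψ φ : n → ℂ) : Matrix n n ℂ :=
  Matrix.of fun p q => ψ p * star (φ q)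

/-- The trace norm `‖A‖_tr = Tr √(AᴴA)`. -/
def traceNorm {n : Type*} [Fintype n] [DecidableEq n] (A : Matrix n n ℂ) : ℝ :=
  ((((Matrix.posSemidef_conjTranspose_mul_self A).1.eigenvectorUnitary : Matrix n n ℂ) *
      Matrix.diagonal (((↑) : ℝ → ℂ) ∘ (√·) ∘ (Matrix.posSemidef_conjTranspose_mul_self A).1.eigenvalues) *
      (star (Matrix.posSemidef_conjTranspose_mul_self A).1.eigenvectorUnitary : Matrix n n ℂ)).trace).re

/-- The trace distance between two states. -/
def traceDist {n : Type*} [Fintype n] [DecidableEq n] (ρ σ : Matrix n n ℂ) : ℝ :=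
  (1 / 2) * traceNorm (ρ - σ)

section TraceInequalities

open Matrix
open scoped MatrixOrder

variable {n : Type*} [Fintype n] [DecidableEq n]

lemma Matrix.PosSemidef.re_trace_mul_nonneg {P Q : Matrix n n ℂ} (hP : P.PosSemidef)
    (hQ : Q.PosSemidef) : 0 ≤ (P * Q).trace.re := by
  obtain ⟨S, rfl⟩ := CStarAlgebra.nonneg_iff_eq_star_mul_self.mp hP.nonneg
  rw [mul_assoc, trace_mul_comm, star_eq_conjTranspose]
  exact (Complex.nonneg_iff.mp (hQ.mul_mul_conjTranspose_same S).trace_nonneg).1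

lemma traceNorm_eq_re_trace_abs (A : Matrix n n ℂ) : traceNorm A = (CFC.abs A).trace.re := by
  have hB := posSemidef_conjTranspose_mul_self A
  rw [CFC.abs, star_eq_conjTranspose, CFC.sqrt_eq_real_sqrt _ hB.nonneg, cfcₙ_eq_cfc,
    hB.1.cfc_eq, IsHermitian.cfc, Unitary.conjStarAlgAut_apply]
  rfl

lemma two_mul_re_trace_mul_le {A M : Matrix n n ℂ} (hA : A.IsHermitian) (hM : M.PosSemidef)
    (hMI : (1 - M).PosSemidef) : 2 * (M * A).trace.re ≤ traceNorm A + A.trace.re := by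
  have hA' : IsSelfAdjoint A := hA
  have hpos : (A⁺).PosSemidef := (CFC.posPart_nonneg A).posSemidef
  have hneg : (A⁻).PosSemidef := (CFC.negPart_nonneg A).posSemidef
  have habs : traceNorm A + A.trace.re = 2 * (A⁺).trace.re := by
    rw [traceNorm_eq_re_trace_abs, ← Complex.add_re, ← trace_add, CFC.abs_add_self A, trace_smul]
    simp
  have hsplit : (M * A).trace.re = (M * A⁺).trace.re - (M * A⁻).trace.re := by
    conv_lhs => rw [← CFC.posPart_sub_negPart A]
    rw [mul_sub, trace_sub, Complex.sub_re]
  have hle : (M * A⁺).trace.re ≤ (A⁺).trace.re := by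
    have := hMI.re_trace_mul_nonneg hpos
    rw [sub_mul, one_mul, trace_sub, Complex.sub_re] at this
    linarith
  have := hM.re_trace_mul_nonneg hneg
  linarith

lemma re_trace_mul_sub_le_traceDist {ρ σ M : Matrix n n ℂ} (hρ : ρ.IsHermitian)
    (hσ : σ.IsHermitian) (htr : ρ.trace = σ.trace) (hM : M.PosSemidef)
    (hMI : (1 - M).PosSemidef) : (M * ρ).trace.re - (M * σ).trace.re ≤ traceDist ρ σ := by
  have h := two_mul_re_trace_mul_le (hρ.sub hσ) hM hMI
  rw [mul_sub, trace_sub, trace_sub, htr, sub_self, Complex.zero_re, add_zero,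
    Complex.sub_re] at h
  rw [traceDist]
  linarith

lemma re_trace_mul_le_one {ρ M : Matrix n n ℂ} (hρ : ρ.PosSemidef) (hρt : ρ.trace = 1)
    (hMI : (1 - M).PosSemidef) : (M * ρ).trace.re ≤ 1 := by
  have := hMI.re_trace_mul_nonneg hρ
  rw [sub_mul, one_mul, trace_sub, Complex.sub_re, hρt, Complex.one_re] at this
  linarith

end TraceInequalities

lemma sub_le_sum_Icc_of_sub_le {f g : ℕ → ℝ} {m : ℕ}
    (h : ∀ j ∈ Icc 1 m, f (j - 1) - f j ≤ g j) : f 0 - f m ≤ ∑ j ∈ Icc 1 m, g j := by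
  induction m with
  | zero => simp
  | succ m ih =>
    rw [sum_Icc_succ_top (Nat.le_add_left 1 m)]
    have hlast := h (m + 1) (by simp)
    have hprev := ih fun j hj => h j (Icc_subset_Icc_right m.le_succ hj)
    rw [Nat.add_sub_cancel] at hlast
    linarith

lemma sq_sum_sqrt_le_card_mul_sum {ι : Type*} (s : Finset ι) {a : ι → ℝ}
    (ha : ∀ i ∈ s, 0 ≤ a i) : (∑ i ∈ s, √(a i)) ^ 2 ≤ #s * ∑ i ∈ s, a i := by
  calc (∑ i ∈ s, √(a i)) ^ 2 ≤ #s * ∑ i ∈ s, √(a i) ^ 2 := sq_sum_le_card_mul_sum_sq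
    _ = #s * ∑ i ∈ s, a i := by
      rw [sum_congr rfl fun i hi => Real.sq_sqrt (ha i hi)]

/-- Hybrid argument: if consecutive density matrices are `3√(α_j)`-close in trace
distance, and a POVM element `M` accepts `ρ_0` with probability at least `2/3`,
then with `α_r := Tr(M ρ_{r-1})` we get `α_r ≥ 2/3 - 3∑√(α_j)` and
`∑_{j=1}^r α_j ≥ 1/(21r)`. -/
theorem stmt_12 {n : Type*} [Fintype n] [DecidableEq n] (r : ℕ) (hr : 1 ≤ r)
    (ρ : ℕ → Matrix n n ℂ)
    (hρ : ∀ j < r, (ρ j).PosSemidef ∧ (ρ j).trace = 1)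
    (α : ℕ → ℝ) (hα : ∀ j ∈ Finset.Icc 1 (r - 1), 0 ≤ α j)
    (hclose : ∀ j ∈ Finset.Icc 1 (r - 1), traceDist (ρ (j - 1)) (ρ j) ≤ 3 * Real.sqrt (α j))
    (M : Matrix n n ℂ) (hM : M.PosSemidef) (hMI : (1 - M).PosSemidef)
    (hM0 : ((M * ρ 0).trace).re ≥ 2 / 3)
    (hαr : α r = ((M * ρ (r - 1)).trace).re) :
    α r ≥ 2 / 3 - 3 * ∑ j ∈ Finset.Icc 1 (r - 1), Real.sqrt (α j) ∧
      ∑ j ∈ Finset.Icc 1 r, α j ≥ 1 / (21 * r) := by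
  have hstep : ∀ j ∈ Icc 1 (r - 1),
      (M * ρ (j - 1)).trace.re - (M * ρ j).trace.re ≤ 3 * √(α j) := fun j hj => by
    have hj' := mem_Icc.mp hj
    obtain ⟨hρ₀, hρ₀_tr⟩ := hρ (j - 1) (by omega)
    obtain ⟨hρ₁, hρ₁_tr⟩ := hρ j (by omega)
    exact (re_trace_mul_sub_le_traceDist hρ₀.1 hρ₁.1 (hρ₀_tr.trans hρ₁_tr.symm) hM hMI).trans
      (hclose j hj)
  have hdrift := sub_le_sum_Icc_of_sub_le (f := fun j => (M * ρ j).trace.re) hstep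
  rw [← mul_sum] at hdrift
  have hfirst : α r ≥ 2 / 3 - 3 * ∑ j ∈ Icc 1 (r - 1), √(α j) := by linarith
  refine ⟨hfirst, ?_⟩
  obtain ⟨hρlast, hρlast_tr⟩ := hρ (r - 1) (by omega)
  have hαr0 : 0 ≤ α r := hαr ▸ hM.re_trace_mul_nonneg hρlast
  have hαr_le_sqrt : α r ≤ √(α r) :=
    Real.le_sqrt_self_iff.mpr (hαr ▸ re_trace_mul_le_one hρlast hρlast_tr hMI)
  have hsum_sqrt : 2 / 9 ≤ ∑ j ∈ Icc 1 r, √(α j) := by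
    rw [← Nat.sub_add_cancel hr, sum_Icc_succ_top (by omega), Nat.sub_add_cancel hr]
    linarith
  have hcs := sq_sum_sqrt_le_card_mul_sum (Icc 1 r) (a := α) fun j hj => by
    rcases eq_or_ne j r with rfl | hjr
    · exact hαr0
    · exact hα j (by simp only [mem_Icc] at hj ⊢; omega)
  rw [Nat.card_Icc, Nat.add_sub_cancel] at hcs
  rw [ge_iff_le, div_le_iff₀ (by positivity)]
  nlinarith

end
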